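/- Let r > 0, p ≥ 1, m ∈ ℕ, let E = ℝ^m with the Euclidean inner product, K and E₁ finite-dimensional real inner product spaces, T : E → K and A : E → E₁ linear maps with A surjective, g ∈ K, f ∈ E₁, γ > 0. For every 0 ≤ ε < r, the functional J_p^ε(v) = ‖Tv − g‖² + γ ∑_{i=1}^m W_r^{p,ε}(v_i) attains its minimum on the affine space F = {v ∈ E : Av = f}: there exists v* ∈ F with J_p^ε(v*) ≤ J_p^ε(v) for all v ∈ F. -/

import Mathlib

/-- The smoothed truncated power potential `W_r^{p,ε}`: an even function equal to `|t|^p`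
for `|t| ≤ r−ε`, to the cubic interpolation `π_p(|t|)` for `r−ε ≤ |t| ≤ r+ε`, and to
`r^p` for `|t| ≥ r+ε`. For `ε = 0` it reduces to `W_r^p(t) = min {|t|^p, r^p}`. -/
noncomputable def Wpot (r p ε t : ℝ) : ℝ :=
  if |t| ≤ r - ε then |t| ^ p
  else if |t| ≤ r + ε then
    (p * (r - ε) ^ (p - 1) / (12 * ε ^ 2) +
        (p * (r - ε) ^ (p - 1) / (2 * ε) +
          3 * ((r - ε) ^ p - r ^ p) / (4 * ε ^ 2)) / (3 * ε)) *
      (|t| - (r + ε)) ^ 3 +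
    (p * (r - ε) ^ (p - 1) / (2 * ε) + 3 * ((r - ε) ^ p - r ^ p) / (4 * ε ^ 2)) *
      (|t| - (r + ε)) ^ 2 + r ^ p
  else r ^ p

/-! Along a minimizing sequence `vₙ` on the fiber `A v = f`, the vectors `T vₙ` stay in a compact
set because `‖· - g‖²` is coercive, while each coordinate, after passing to a subsequence
(compactly, in `EReal`), either converges or diverges. Diverging coordinates end up where the
potential is constant, so the objective only depends on `Φ v = (A v, T v, converging
coordinates)`. The range of `Φ` is closed, so `Φ vₙ → Φ w₀`, and by the open mapping theorem
there are `wₙ` with `Φ wₙ = Φ w₀` and `wₙ - vₙ → 0`. For large `n` the diverging coordinates of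
`wₙ` are still in the constant region, so the objective at `wₙ` is the limit of the objective
along `vₙ`: the infimum. -/

open Filter Topology Set

lemma tendsto_abs_atTop_of_tendsto_coe_ereal {α : Type*} {l : Filter α} {u : α → ℝ} {a : EReal}
    (hu : Tendsto (fun n => (u n : EReal)) l (𝓝 a)) (ha : a = ⊤ ∨ a = ⊥) :
    Tendsto (fun n => |u n|) l atTop := by
  refine tendsto_atTop.2 fun b => ?_
  rcases ha with rfl | rfl
  · filter_upwards [EReal.tendsto_nhds_top_iff_real.1 hu b] with n hn
    exact (EReal.coe_lt_coe_iff.1 hn).le.trans (le_abs_self _)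
  · filter_upwards [EReal.tendsto_nhds_bot_iff_real.1 hu (-b)] with n hn
    exact (le_neg.1 (EReal.coe_lt_coe_iff.1 hn).le).trans (neg_le_abs _)

lemma exists_subseq_tendsto_and_tendsto_or_abs_tendsto_atTop {ι X : Type*} [Countable ι]
    [TopologicalSpace X] [FirstCountableTopology X] {t : Set X} (ht : IsCompact t) {y : ℕ → X}
    (hy : ∀ n, y n ∈ t) (u : ℕ → ι → ℝ) :
    ∃ φ : ℕ → ℕ, StrictMono φ ∧ ∃ (a : X) (s : Set ι) (x : ι → ℝ),
      Tendsto (fun n => y (φ n)) atTop (𝓝 a) ∧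
      (∀ i ∉ s, Tendsto (fun n => u (φ n) i) atTop (𝓝 (x i))) ∧
      ∀ i ∈ s, Tendsto (fun n => |u (φ n) i|) atTop atTop := by
  obtain ⟨⟨a, b⟩, -, φ, hφ, hlim⟩ := (ht.prod (isCompact_univ (X := ι → EReal))).tendsto_subseq
    (x := fun n => (y n, fun i => (u n i : EReal))) fun n => ⟨hy n, mem_univ _⟩
  have hb : ∀ i, Tendsto (fun n => (u (φ n) i : EReal)) atTop (𝓝 (b i)) :=
    tendsto_pi_nhds.1 ((continuous_snd.tendsto _).comp hlim)
  refine ⟨φ, hφ, a, {i | b i = ⊤ ∨ b i = ⊥}, fun i => (b i).toReal,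
    (continuous_fst.tendsto _).comp hlim,
    fun i hi => ?_, fun i hi => tendsto_abs_atTop_of_tendsto_coe_ereal (hb i) hi⟩
  simp only [mem_ofPred_eq, not_or] at hi
  have hbi := hb i
  rw [← EReal.coe_toReal hi.1 hi.2] at hbi
  exact EReal.tendsto_coe.1 hbi

lemma LinearMap.exists_map_eq_tendsto_sub_zero {E F α : Type*} [NormedAddCommGroup E]
    [NormedSpace ℝ E] [FiniteDimensional ℝ E] [NormedAddCommGroup F] [NormedSpace ℝ F]
    (Φ : E →ₗ[ℝ] F) {l : Filter α} [l.NeBot] {v : α → E} {z : F}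
    (hv : Tendsto (fun n => Φ (v n)) l (𝓝 z)) :
    ∃ w : α → E, (∀ n, Φ (w n) = z) ∧ Tendsto (fun n => w n - v n) l (𝓝 0) := by
  have hz : z ∈ LinearMap.range Φ := (Submodule.closed_of_finiteDimensional _).closure_subset
    (mem_closure_of_tendsto hv (Eventually.of_forall fun n => LinearMap.mem_range_self Φ _))
  obtain ⟨C, -, hC⟩ := (LinearMap.toContinuousLinearMap Φ.rangeRestrict).exists_preimage_norm_le
    Φ.surjective_rangeRestrict
  choose d hd hdC using fun n => hC (⟨z, hz⟩ - Φ.rangeRestrict (v n))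
  refine ⟨fun n => v n + d n, fun n => ?_, ?_⟩
  · have := congrArg Subtype.val (hd n)
    simp only [LinearMap.coe_toContinuousLinearMap', LinearMap.codRestrict_apply] at this
    simp [this]
  · simp only [add_sub_cancel_left]
    refine squeeze_zero_norm (a := fun n => C * ‖Φ (v n) - z‖) (fun n => (hdC n).trans_eq ?_) ?_
    · rw [norm_sub_rev]
      rfl
    · simpa using ((hv.sub_const z).norm.const_mul C)

lemma bddBelow_range_of_eq_of_le_abs {h : ℝ → ℝ} (hh : Continuous h) {R c : ℝ}
    (hhc : ∀ t, R ≤ |t| → h t = c) : BddBelow (range h) := by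
  refine (((isCompact_Icc (a := -R) (b := R)).image hh).bddBelow.union
    (bddBelow_singleton (a := c))).mono ?_
  rintro _ ⟨t, rfl⟩
  by_cases ht : R ≤ |t|
  · exact Or.inr (hhc t ht)
  · exact Or.inl ⟨t, abs_le.1 (not_le.1 ht).le, rfl⟩

section PenalizedLeastSquares

variable {ι E K F : Type*} [Fintype ι] [NormedAddCommGroup E] [NormedSpace ℝ E]
  [FiniteDimensional ℝ E] [NormedAddCommGroup K] [NormedSpace ℝ K] [NormedAddCommGroup F]
  [NormedSpace ℝ F] (A : E →ₗ[ℝ] F) (T : E →ₗ[ℝ] K) (ℓ : ι → E →ₗ[ℝ] ℝ) {q : K → ℝ} {h : ℝ → ℝ}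

lemma exists_tendsto_of_tendsto_or_abs_tendsto_atTop (hq : Continuous q) (hh : Continuous h)
    {R c : ℝ} (hhc : ∀ t, R ≤ |t| → h t = c) {f : F} {v : ℕ → E} (hv : ∀ n, A (v n) = f)
    {y : K} (hy : Tendsto (fun n => T (v n)) atTop (𝓝 y)) {s : Set ι} {x : ι → ℝ}
    (hfin : ∀ i ∉ s, Tendsto (fun n => ℓ i (v n)) atTop (𝓝 (x i)))
    (hinf : ∀ i ∈ s, Tendsto (fun n => |ℓ i (v n)|) atTop atTop) :
    ∃ w, A w = f ∧ Tendsto (fun n => q (T (v n)) + ∑ i, h (ℓ i (v n))) atTop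
      (𝓝 (q (T w) + ∑ i, h (ℓ i w))) := by
  classical
  let P : E →ₗ[ℝ] ι → ℝ := LinearMap.pi fun i => if i ∈ s then 0 else ℓ i
  let Φ := A.prod (T.prod P)
  let H : F × K × (ι → ℝ) → ℝ := fun z => q z.2.1 + ∑ i, if i ∈ s then c else h (z.2.2 i)
  have hH : Continuous H :=
    (hq.comp (continuous_fst.comp continuous_snd)).add <| continuous_finsetSum _ fun i _ => by
      split_ifs <;> fun_prop
  have hJH : ∀ u, (∀ i ∈ s, R ≤ |ℓ i u|) → q (T u) + ∑ i, h (ℓ i u) = H (Φ u) := by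
    intro u hu
    refine congrArg _ (Finset.sum_congr rfl fun i _ => ?_)
    by_cases hi : i ∈ s
    · simp [hi, hhc _ (hu i hi)]
    · simp [Φ, P, hi]
  let z : F × K × (ι → ℝ) := (f, y, fun i => if i ∈ s then 0 else x i)
  have hΦ : Tendsto (fun n => Φ (v n)) atTop (𝓝 z) := by
    refine tendsto_const_nhds.congr (fun n => (hv n).symm) |>.prodMk_nhds (hy.prodMk_nhds ?_)
    refine tendsto_pi_nhds.2 fun i => ?_
    by_cases hi : i ∈ s
    · simp [P, hi]
    · simpa [P, hi] using hfin i hi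
  obtain ⟨w, hwz, hwv⟩ := Φ.exists_map_eq_tendsto_sub_zero hΦ
  have hlarge : ∀ᶠ n in atTop, ∀ i ∈ s, R ≤ |ℓ i (v n)| ∧ R ≤ |ℓ i (w n)| := by
    refine (s.toFinite.eventually_all).2 fun i hi => ?_
    have hℓ : Tendsto (fun n => ℓ i (w n - v n)) atTop (𝓝 0) :=
      ((ℓ i).continuous_of_finiteDimensional.tendsto' 0 0 (map_zero _)).comp hwv
    filter_upwards [(hinf i hi).eventually_ge_atTop (R + 1),
      hℓ.abs.eventually (ge_mem_nhds (show |(0 : ℝ)| < 1 by simp))] with n hvn hwn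
    have := abs_sub_abs_le_abs_sub (ℓ i (v n)) (ℓ i (w n))
    rw [abs_sub_comm, ← map_sub] at this
    exact ⟨by linarith, by linarith⟩
  obtain ⟨N, hN⟩ := hlarge.exists
  refine ⟨w N, congrArg Prod.fst (hwz N), ?_⟩
  rw [hJH (w N) fun i hi => (hN i hi).2, hwz N]
  refine ((hH.tendsto z).comp hΦ).congr' ?_
  filter_upwards [hlarge] with n hn using (hJH _ fun i hi => (hn i hi).1).symm

lemma exists_eq_of_tendsto_of_mem_isCompact (hq : Continuous q) (hh : Continuous h)
    {R c : ℝ} (hhc : ∀ t, R ≤ |t| → h t = c) {f : F} {v : ℕ → E} (hv : ∀ n, A (v n) = f)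
    {t : Set K} (ht : IsCompact t) (hvt : ∀ n, T (v n) ∈ t) {μ : ℝ}
    (hμ : Tendsto (fun n => q (T (v n)) + ∑ i, h (ℓ i (v n))) atTop (𝓝 μ)) :
    ∃ w, A w = f ∧ q (T w) + ∑ i, h (ℓ i w) = μ := by
  obtain ⟨φ, hφ, y, s, x, hy, hfin, hinf⟩ :=
    exists_subseq_tendsto_and_tendsto_or_abs_tendsto_atTop ht hvt fun n i => ℓ i (v n)
  obtain ⟨w, hwf, hw⟩ := exists_tendsto_of_tendsto_or_abs_tendsto_atTop A T ℓ hq hh hhc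
    (fun n => hv (φ n)) hy hfin hinf
  exact ⟨w, hwf, tendsto_nhds_unique hw (hμ.comp hφ.tendsto_atTop)⟩

theorem exists_forall_le_of_tendsto_cocompact (hq : Continuous q)
    (hq_coercive : Tendsto q (cocompact K) atTop) (hh : Continuous h) {R c : ℝ}
    (hhc : ∀ t, R ≤ |t| → h t = c) {f : F} (hf : ∃ v, A v = f) :
    ∃ w, A w = f ∧ ∀ v, A v = f →
      q (T w) + ∑ i, h (ℓ i w) ≤ q (T v) + ∑ i, h (ℓ i v) := by
  set J : E → ℝ := fun v => q (T v) + ∑ i, h (ℓ i v)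
  obtain ⟨y₀, hy₀⟩ := hq.exists_forall_le hq_coercive
  obtain ⟨b, hb⟩ := bddBelow_range_of_eq_of_le_abs hh hhc
  have hsum : ∀ v, Fintype.card ι * b ≤ ∑ i, h (ℓ i v) := fun v => by
    simpa using Finset.card_nsmul_le_sum Finset.univ _ b fun i _ => hb (mem_range_self (ℓ i v))
  have hJ : BddBelow (J '' {v | A v = f}) :=
    ⟨q y₀ + Fintype.card ι * b, forall_mem_image.2 fun v _ => add_le_add (hy₀ _) (hsum v)⟩
  obtain ⟨v₀, hv₀⟩ := hf
  obtain ⟨u, hu_anti, hu, huJ⟩ := exists_seq_tendsto_sInf ⟨_, mem_image_of_mem J hv₀⟩ hJ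
  choose v hvf hvu using huJ
  obtain ⟨t, ht, hqt⟩ := mem_cocompact.1
    (hq_coercive.eventually_gt_atTop (u 0 - Fintype.card ι * b))
  have hvt : ∀ n, T (v n) ∈ t := fun n => by
    by_contra hn
    have hle : q (T (v n)) + ∑ i, h (ℓ i (v n)) ≤ u 0 := (hvu n).trans_le (hu_anti n.zero_le)
    have hgt : u 0 - Fintype.card ι * b < q (T (v n)) := hqt hn
    linarith [hsum (v n)]
  obtain ⟨w, hwf, hwμ⟩ := exists_eq_of_tendsto_of_mem_isCompact A T ℓ hq hh hhc hvf ht hvt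
    (hu.congr fun n => (hvu n).symm)
  exact ⟨w, hwf, fun v' hv' => hwμ ▸ csInf_le hJ ⟨v', hv', rfl⟩⟩

end PenalizedLeastSquares

lemma Wpot_eq_of_le_abs {r p ε t : ℝ} (hε : 0 ≤ ε) (ht : r + ε ≤ |t|) : Wpot r p ε t = r ^ p := by
  unfold Wpot
  split_ifs with h₁ h₂
  · rw [show |t| = r by linarith]
  · rw [le_antisymm h₂ ht]
    ring
  · rfl

lemma continuous_Wpot {r p ε : ℝ} (hp : 0 ≤ p) (hε : 0 ≤ ε) : Continuous (Wpot r p ε) := by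
  unfold Wpot
  refine Continuous.if_le (continuous_abs.rpow_const fun _ => Or.inr hp) ?_ continuous_abs
    continuous_const fun t ht => ?_
  · refine Continuous.if_le (by fun_prop) continuous_const continuous_abs continuous_const
      fun t ht => ?_
    rw [ht]
    ring
  · rw [if_pos (by linarith), ht]
    -- `π_p(r - ε) = (r - ε)^p`: this is what the coefficients `A₀` and `B` are chosen for.
    rcases hε.eq_or_lt with rfl | hε
    · simp
    · field_simp
      ring

theorem statement8 (r p : ℝ) (hp : 1 ≤ p) (m : ℕ)
    {K E₁ : Type*}
    [NormedAddCommGroup K] [InnerProductSpace ℝ K] [FiniteDimensional ℝ K]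
    [NormedAddCommGroup E₁] [InnerProductSpace ℝ E₁]
    (T : EuclideanSpace ℝ (Fin m) →ₗ[ℝ] K) (A : EuclideanSpace ℝ (Fin m) →ₗ[ℝ] E₁)
    (hA : Function.Surjective A) (g : K) (f : E₁) (γ : ℝ)
    (ε : ℝ) (hε0 : 0 ≤ ε) :
    ∃ vstar : EuclideanSpace ℝ (Fin m), A vstar = f ∧
      ∀ v : EuclideanSpace ℝ (Fin m), A v = f →
        ‖T vstar - g‖ ^ 2 + γ * ∑ i, Wpot r p ε (vstar i) ≤
          ‖T v - g‖ ^ 2 + γ * ∑ i, Wpot r p ε (v i) := by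
  have hcoercive : Tendsto (fun y : K => ‖y - g‖ ^ 2) (cocompact K) atTop := by
    simp_rw [← dist_eq_norm]
    exact (tendsto_pow_atTop two_ne_zero).comp (tendsto_dist_right_cocompact_atTop g)
  simpa only [Finset.mul_sum, PiLp.projₗ_apply] using exists_forall_le_of_tendsto_cocompact A T
    EuclideanSpace.projₗ (by fun_prop) hcoercive
    ((continuous_Wpot (zero_le_one.trans hp) hε0).const_mul γ)
    (fun t ht => by rw [Wpot_eq_of_le_abs hε0 ht]) (hA f)
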